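/- Let X be a rack, x₀ ∈ X an element with x₀·x₀ = x₀ (e.g., any element of a quandle), and R an associative ring with unity. For λ in the group of units R* of R, set φ(λ) := e + (λ − 1)x₀ ∈ R°[X]. Then φ(λ)·φ(μ) = φ(λμ) for all λ, μ ∈ R*, φ(1) = e, each φ(λ) has the two-sided inverse φ(λ⁻¹), and φ is injective. In particular, the set V₂ = {e + (λ − 1)x₀ | λ ∈ R*} is a group under the multiplication of R°[X], isomorphic to R*. -/
import Mathlib


/-!
Statement 9: Let `X` be a rack, `x₀ ∈ X` with `x₀·x₀ = x₀`, and `R` an associative ring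
with unity. For `λ ∈ R*` set `φ(λ) := e + (λ − 1)x₀ ∈ R°[X]`. Then `φ(λ)·φ(μ) = φ(λμ)`,
`φ(1) = e`, each `φ(λ)` has two-sided inverse `φ(λ⁻¹)`, and `φ` is injective.
In particular `V₂ = {e + (λ − 1)x₀ | λ ∈ R*}` is a group under the multiplication of
`R°[X]`, isomorphic to `R*`.

`R°[X]` is modelled as `R × (X →₀ R)` with unity `e = (1, 0)`; the element
`e + (λ − 1)x₀` is the pair `(1, (λ − 1) • single x₀ 1)`.
-/

variable {X R : Type*}

/-- Multiplication on the free module `X →₀ R` induced by a binary operation on `X`. -/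
noncomputable def qmul [Ring R] (op : X → X → X) (u v : X →₀ R) : X →₀ R :=
  u.sum fun x a => v.sum fun y b => Finsupp.single (op x y) (a * b)

/-- Right scalar action of `R` on `X →₀ R` (multiplying each coefficient on the right). -/
noncomputable def rsmul [Ring R] (s : R) (a : X →₀ R) : X →₀ R :=
  a.sum fun x c => Finsupp.single x (c * s)

/-- Multiplication of the extended rack ring `R°[X] = R × R[X]`:
`(r, a)(s, b) = (rs, r•b + a•s + ab)`. -/
noncomputable def emul [Ring R] (op : X → X → X) (u v : R × (X →₀ R)) : R × (X →₀ R) :=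
  (u.1 * v.1, u.1 • v.2 + rsmul v.1 u.2 + qmul op u.2 v.2)

lemma qmul_single [Ring R] (op : X → X → X) (x y : X) (a b : R) :
    qmul op (Finsupp.single x a) (Finsupp.single y b) = Finsupp.single (op x y) (a * b) := by
  unfold qmul
  rw [Finsupp.sum_single_index]
  · rw [Finsupp.sum_single_index]; simp
  · simp

lemma rsmul_single [Ring R] (x : X) (a s : R) :
    rsmul s (Finsupp.single x a) = Finsupp.single x (a * s) := by
  unfold rsmul
  rw [Finsupp.sum_single_index]; simp

lemma key [Ring R] (op : X → X → X) (x₀ : X) (hx₀ : op x₀ x₀ = x₀) (c d : R) :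
    emul op (1, c • Finsupp.single x₀ (1 : R)) (1, d • Finsupp.single x₀ (1 : R))
      = (1, (c + d + c * d) • Finsupp.single x₀ (1 : R)) := by
  have h : ∀ c : R, c • Finsupp.single x₀ (1 : R) = Finsupp.single x₀ c := by
    intro c; rw [Finsupp.smul_single, smul_eq_mul, mul_one]
  unfold emul
  simp only [h, qmul_single, rsmul_single, hx₀, one_smul]
  simp only [one_mul, mul_one, Prod.mk.injEq, true_and]
  rw [← Finsupp.single_add, ← Finsupp.single_add, add_comm d c]


theorem stmt_9 [Ring R] (op : X → X → X)
    (hbij : ∀ y, Function.Bijective fun x => op x y)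
    (hdist : ∀ x y z, op (op x y) z = op (op x z) (op y z))
    (x₀ : X) (hx₀ : op x₀ x₀ = x₀) :
    let φ : Rˣ → R × (X →₀ R) :=
      fun l => (1, ((l : R) - 1) • Finsupp.single x₀ (1 : R))
    (∀ l m : Rˣ, emul op (φ l) (φ m) = φ (l * m)) ∧
    φ 1 = ((1 : R), 0) ∧
    (∀ l : Rˣ, emul op (φ l) (φ l⁻¹) = ((1 : R), 0) ∧
      emul op (φ l⁻¹) (φ l) = ((1 : R), 0)) ∧
    Function.Injective φ := by
  intro φ
  have hmul : ∀ l m : Rˣ, emul op (φ l) (φ m) = φ (l * m) := by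
    intro l m
    show emul op (1, _) (1, _) = _
    rw [key op x₀ hx₀]
    have : ((l : R) - 1) + ((m : R) - 1) + ((l : R) - 1) * ((m : R) - 1)
        = ((l * m : Rˣ) : R) - 1 := by push_cast; noncomm_ring
    rw [this]
  refine ⟨hmul, ?_, ?_, ?_⟩
  · show (1, ((1 : R) - 1) • _) = _
    simp
  · intro l
    constructor
    · rw [hmul, mul_inv_cancel]; show (1, ((1 : R) - 1) • _) = _; simp
    · rw [hmul, inv_mul_cancel]; show (1, ((1 : R) - 1) • _) = _; simp
  · intro l m h
    have h2 := congrArg Prod.snd h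
    simp only [φ] at h2
    have h3 := congrArg (fun f => f x₀) h2
    simp [Finsupp.smul_single] at h3
    exact Units.ext h3
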